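/- Let g : P × Λ → E be square-integrable with respect to μ ⊗ ν, with overall mean ḡ and conditional means ḡ₁(p) = ∫ g(p,λ) dν(λ) and ḡ₂(λ) = ∫ g(p,λ) dμ(p). Let g̃ = (1/(KB)) Σ_{i=1}^B Σ_{k=1}^K g(p_i, λ_k), where p₁,…,p_B are i.i.d. with law μ, λ₁,…,λ_K are i.i.d. with law ν, all mutually independent, and the same λ_k's are shared across all p_i. Then Var[g̃] := E‖g̃ − ḡ‖² satisfies the exact formula Var[g̃] = (1/K) ( (1/B) Var[g] + ((B−1)/B) V_λ ) + (1 − 1/K) · (1/B) V_x, where Var[g] = ∫ ‖g − ḡ‖² d(μ⊗ν), V_x = ∫_P ‖ḡ₁(p) − ḡ‖² dμ(p), and V_λ = ∫_Λ ‖ḡ₂(λ) − ḡ‖² dν(λ). -/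

import Mathlib

/-!
Write `g̃ - ḡ` as the average over the `B * K` index pairs `(i, k)` of `h (p i, λ k)`, where
`h = g - ḡ`, and expand the squared norm into the `(B K)²` inner products
`E ⟪h (p i, λ k), h (p j, λ l)⟫`. By independence such a term is `Var[g]` when `(i, k) = (j, l)`;
`V_x` when only `i = j`, since the two independent weights then integrate out to `ḡ₁ - ḡ`;
symmetrically `V_λ` when only `k = l`; and `‖E h‖² = 0` when `i ≠ j` and `k ≠ l`.
Counting the index pairs of each kind gives the formula.
-/

open MeasureTheory ProbabilityTheory
open scoped RealInnerProductSpace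

section InnerIntegral

variable {α β γ E : Type*} [MeasurableSpace α] [MeasurableSpace β] [MeasurableSpace γ]
  [NormedAddCommGroup E] [InnerProductSpace ℝ E]

theorem MeasureTheory.MemLp.integrable_inner {μ : Measure α} {f g : α → E}
    (hf : MemLp f 2 μ) (hg : MemLp g 2 μ) : Integrable (fun x => ⟪f x, g x⟫) μ :=
  (L2.integrable_inner (𝕜 := ℝ) (hf.toLp f) (hg.toLp g)).congr <| by
    filter_upwards [hf.coeFn_toLp, hg.coeFn_toLp] with x hfx hgx
    rw [hfx, hgx]

theorem MeasureTheory.MemLp.integrable_inner_comp {μ : Measure α} {ρ : Measure γ} {F : γ → E}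
    (hF : MemLp F 2 ρ) {φ ψ : α → γ} (hφ : MeasurePreserving φ μ ρ)
    (hψ : MeasurePreserving ψ μ ρ) : Integrable (fun x => ⟪F (φ x), F (ψ x)⟫) μ :=
  (hF.comp_measurePreserving hφ).integrable_inner (hF.comp_measurePreserving hψ)

theorem MeasureTheory.MeasurePreserving.integral_comp_of_aestronglyMeasurable
    {μ : Measure α} {ρ : Measure γ} {φ : α → γ} (hφ : MeasurePreserving φ μ ρ) {F : γ → E}
    (hF : AEStronglyMeasurable F ρ) : ∫ x, F (φ x) ∂μ = ∫ z, F z ∂ρ := by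
  rw [← hφ.map_eq] at hF ⊢
  exact (integral_map hφ.aemeasurable hF).symm

variable [CompleteSpace E]

theorem integral_sub_const {μ : Measure α} [IsProbabilityMeasure μ] {f : α → E}
    (hf : Integrable f μ) (c : E) : ∫ x, (f x - c) ∂μ = ∫ x, f x ∂μ - c := by
  rw [integral_sub hf (integrable_const c), integral_const, probReal_univ, one_smul]

theorem integral_prod_inner (μ : Measure α) (ν : Measure β) [SFinite μ] [SFinite ν]
    {f : α → E} {g : β → E} (hf : Integrable f μ) (hg : Integrable g ν) :
    ∫ z : α × β, ⟪f z.1, g z.2⟫ ∂(μ.prod ν) = ⟪∫ x, f x ∂μ, ∫ y, g y ∂ν⟫ := by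
  have hint : Integrable (fun z : α × β => ⟪f z.1, g z.2⟫) (μ.prod ν) :=
    hf.op_fst_snd continuous_inner ⟨1, fun x y => by simpa using norm_inner_le_norm (𝕜 := ℝ) x y⟩ hg
  rw [integral_prod _ hint]
  simp_rw [integral_inner (𝕜 := ℝ) hg, real_inner_comm (∫ y, g y ∂ν)]
  rw [integral_inner hf, real_inner_comm]

end InnerIntegral

section JointLaw

variable {Ω α β E : Type*} [MeasurableSpace Ω] [MeasurableSpace α] [MeasurableSpace β]
  [NormedAddCommGroup E] [InnerProductSpace ℝ E] [CompleteSpace E] {m : Measure Ω}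
  {μ : Measure α} {ν : Measure β} [IsProbabilityMeasure μ] [IsProbabilityMeasure ν]
  {F : α × β → E}

theorem integral_inner_of_shared_fst (hF : MemLp F 2 (μ.prod ν)) {X : Ω → α} {Y Y' : Ω → β}
    (hlaw : MeasurePreserving (fun ω => (X ω, Y ω, Y' ω)) m (μ.prod (ν.prod ν))) :
    ∫ ω, ⟪F (X ω, Y ω), F (X ω, Y' ω)⟫ ∂m = ∫ x, ‖∫ y, F (x, y) ∂ν‖ ^ 2 ∂μ := by
  have hint : Integrable (fun z : α × (β × β) => ⟪F (z.1, z.2.1), F (z.1, z.2.2)⟫)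
      (μ.prod (ν.prod ν)) :=
    hF.integrable_inner_comp ((MeasurePreserving.id μ).prod (measurePreserving_fst (ν := ν)))
      ((MeasurePreserving.id μ).prod (measurePreserving_snd (μ := ν)))
  refine (hlaw.integral_comp_of_aestronglyMeasurable hint.1).trans ?_
  rw [integral_prod _ hint]
  refine integral_congr_ae ?_
  filter_upwards [(hF.integrable one_le_two).prod_right_ae] with x hx
  rw [integral_prod_inner ν ν hx hx, real_inner_self_eq_norm_sq]

theorem integral_inner_of_shared_snd (hF : MemLp F 2 (μ.prod ν)) {X X' : Ω → α} {Y : Ω → β}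
    (hlaw : MeasurePreserving (fun ω => ((X ω, X' ω), Y ω)) m ((μ.prod μ).prod ν)) :
    ∫ ω, ⟪F (X ω, Y ω), F (X' ω, Y ω)⟫ ∂m = ∫ y, ‖∫ x, F (x, y) ∂μ‖ ^ 2 ∂ν := by
  have hint : Integrable (fun z : (α × α) × β => ⟪F (z.1.1, z.2), F (z.1.2, z.2)⟫)
      ((μ.prod μ).prod ν) :=
    hF.integrable_inner_comp ((measurePreserving_fst (ν := μ)).prod (MeasurePreserving.id ν))
      ((measurePreserving_snd (μ := μ)).prod (MeasurePreserving.id ν))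
  refine (hlaw.integral_comp_of_aestronglyMeasurable hint.1).trans ?_
  rw [integral_prod_symm _ hint]
  refine integral_congr_ae ?_
  filter_upwards [(hF.integrable one_le_two).prod_left_ae] with y hy
  rw [integral_prod_inner μ μ hy hy, real_inner_self_eq_norm_sq]

theorem integral_inner_of_indep (hF : MemLp F 2 (μ.prod ν)) {X X' : Ω → α} {Y Y' : Ω → β}
    (hlaw : MeasurePreserving (fun ω => ((X ω, X' ω), (Y ω, Y' ω))) m
      ((μ.prod μ).prod (ν.prod ν))) :
    ∫ ω, ⟪F (X ω, Y ω), F (X' ω, Y' ω)⟫ ∂m = ‖∫ z, F z ∂(μ.prod ν)‖ ^ 2 := by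
  have hint : Integrable (fun z : (α × α) × (β × β) => ⟪F (z.1.1, z.2.1), F (z.1.2, z.2.2)⟫)
      ((μ.prod μ).prod (ν.prod ν)) :=
    hF.integrable_inner_comp
      ((measurePreserving_fst (ν := μ)).prod (measurePreserving_fst (ν := ν)))
      ((measurePreserving_snd (μ := μ)).prod (measurePreserving_snd (μ := ν)))
  have hFi := hF.integrable one_le_two
  refine (hlaw.integral_comp_of_aestronglyMeasurable hint.1).trans ?_
  rw [integral_prod _ hint, ← real_inner_self_eq_norm_sq, integral_prod _ hFi,
    ← integral_prod_inner μ μ hFi.integral_prod_left hFi.integral_prod_left]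
  refine integral_congr_ae ?_
  have hsec := hFi.prod_right_ae
  filter_upwards [Measure.quasiMeasurePreserving_fst.ae hsec,
    Measure.quasiMeasurePreserving_snd.ae hsec] with w hw₁ hw₂
  exact integral_prod_inner ν ν hw₁ hw₂

end JointLaw

section Coordinates

variable {ι κ α β E : Type*} [Fintype ι] [Fintype κ] [MeasurableSpace α] [MeasurableSpace β]
  [NormedAddCommGroup E] [InnerProductSpace ℝ E] (μ : Measure α) (ν : Measure β)
  [IsProbabilityMeasure μ] [IsProbabilityMeasure ν]

theorem measurePreserving_eval_pair {i j : ι} (hij : i ≠ j) :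
    MeasurePreserving (fun x : ι → α => (x i, x j)) (Measure.pi fun _ => μ) (μ.prod μ) := by
  have hind : IndepFun (fun x : ι → α => x i) (fun x => x j) (Measure.pi fun _ => μ) :=
    (iIndepFun_pi (X := fun _ => id) fun _ => aemeasurable_id).indepFun hij
  refine ⟨by fun_prop, ?_⟩
  rw [(indepFun_iff_map_prod_eq_prod_map_map (measurable_pi_apply i).aemeasurable
    (measurable_pi_apply j).aemeasurable).1 hind,
    (measurePreserving_eval _ i).map_eq, (measurePreserving_eval _ j).map_eq]

theorem measurePreserving_eval_prod_eval (i : ι) (k : κ) :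
    MeasurePreserving (fun x : (ι → α) × (κ → β) => (x.1 i, x.2 k))
      ((Measure.pi fun _ => μ).prod (Measure.pi fun _ => ν)) (μ.prod ν) :=
  (measurePreserving_eval (fun _ => μ) i).prod (measurePreserving_eval (fun _ => ν) k)

variable [DecidableEq ι] [DecidableEq κ] [CompleteSpace E] {F : α × β → E}

theorem integral_inner_pi_prod_pi (hF : MemLp F 2 (μ.prod ν)) (i j : ι) (k l : κ) :
    ∫ x, ⟪F (x.1 i, x.2 k), F (x.1 j, x.2 l)⟫
        ∂((Measure.pi fun _ : ι => μ).prod (Measure.pi fun _ : κ => ν))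
      = if i = j then
          if k = l then ∫ z, ‖F z‖ ^ 2 ∂(μ.prod ν) else ∫ x, ‖∫ y, F (x, y) ∂ν‖ ^ 2 ∂μ
        else
          if k = l then ∫ y, ‖∫ x, F (x, y) ∂μ‖ ^ 2 ∂ν else ‖∫ z, F z ∂(μ.prod ν)‖ ^ 2 := by
  split_ifs with hij hkl hkl
  · subst hij hkl
    refine ((measurePreserving_eval_prod_eval μ ν i k).integral_comp_of_aestronglyMeasurable
      (hF.1.inner (𝕜 := ℝ) hF.1)).trans ?_
    simp_rw [real_inner_self_eq_norm_sq]
  · subst hij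
    exact integral_inner_of_shared_fst hF
      ((measurePreserving_eval (fun _ => μ) i).prod (measurePreserving_eval_pair ν hkl))
  · subst hkl
    exact integral_inner_of_shared_snd hF
      ((measurePreserving_eval_pair μ hij).prod (measurePreserving_eval (fun _ => ν) k))
  · exact integral_inner_of_indep hF
      ((measurePreserving_eval_pair μ hij).prod (measurePreserving_eval_pair ν hkl))

theorem integral_sum_inner_sub_integral_pi_prod_pi {g : α × β → E} (hg : MemLp g 2 (μ.prod ν)) :
    ∫ x, ∑ p : ι × κ, ∑ q : ι × κ,
        ⟪g (x.1 p.1, x.2 p.2) - ∫ z, g z ∂(μ.prod ν), g (x.1 q.1, x.2 q.2) - ∫ z, g z ∂(μ.prod ν)⟫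
        ∂((Measure.pi fun _ : ι => μ).prod (Measure.pi fun _ : κ => ν))
      = ∑ p : ι × κ, ∑ q : ι × κ, if p.1 = q.1 then
          if p.2 = q.2 then ∫ z, ‖g z - ∫ z, g z ∂(μ.prod ν)‖ ^ 2 ∂(μ.prod ν)
          else ∫ x, ‖∫ y, g (x, y) ∂ν - ∫ z, g z ∂(μ.prod ν)‖ ^ 2 ∂μ
        else
          if p.2 = q.2 then ∫ y, ‖∫ x, g (x, y) ∂μ - ∫ z, g z ∂(μ.prod ν)‖ ^ 2 ∂ν else 0 := by
  set c := ∫ z, g z ∂(μ.prod ν)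
  have hgi := hg.integrable one_le_two
  have hF : MemLp (fun z => g z - c) 2 (μ.prod ν) := hg.sub (memLp_const c)
  have hint (p q : ι × κ) : Integrable (fun x : (ι → α) × (κ → β) =>
      ⟪g (x.1 p.1, x.2 p.2) - c, g (x.1 q.1, x.2 q.2) - c⟫)
      ((Measure.pi fun _ : ι => μ).prod (Measure.pi fun _ : κ => ν)) :=
    hF.integrable_inner_comp (measurePreserving_eval_prod_eval μ ν p.1 p.2)
      (measurePreserving_eval_prod_eval μ ν q.1 q.2)
  have hfst : ∫ x, ‖∫ y, (g (x, y) - c) ∂ν‖ ^ 2 ∂μ = ∫ x, ‖∫ y, g (x, y) ∂ν - c‖ ^ 2 ∂μ := by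
    refine integral_congr_ae ?_
    filter_upwards [hgi.prod_right_ae] with x hx
    rw [integral_sub_const hx]
  have hsnd : ∫ y, ‖∫ x, (g (x, y) - c) ∂μ‖ ^ 2 ∂ν = ∫ y, ‖∫ x, g (x, y) ∂μ - c‖ ^ 2 ∂ν := by
    refine integral_congr_ae ?_
    filter_upwards [hgi.prod_left_ae] with y hy
    rw [integral_sub_const hy]
  have hmean : ‖∫ z, (g z - c) ∂(μ.prod ν)‖ ^ 2 = 0 := by
    rw [integral_sub_const hgi, sub_self, norm_zero, sq, mul_zero]
  rw [integral_finsetSum _ fun p _ => integrable_finsetSum _ fun q _ => hint p q]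
  simp_rw [integral_finsetSum _ fun q _ => hint _ q, integral_inner_pi_prod_pi μ ν hF, hfst, hsnd,
    hmean]

end Coordinates

theorem norm_inv_card_smul_sum_sub_sq {ι E : Type*} [Fintype ι] [Nonempty ι]
    [NormedAddCommGroup E] [InnerProductSpace ℝ E] (f : ι → E) (a : E) :
    ‖(Fintype.card ι : ℝ)⁻¹ • ∑ i, f i - a‖ ^ 2
      = (Fintype.card ι : ℝ)⁻¹ ^ 2 * ∑ i, ∑ j, ⟪f i - a, f j - a⟫ := by
  have hcard : (Fintype.card ι : ℝ) ≠ 0 := Nat.cast_ne_zero.2 Fintype.card_ne_zero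
  have hcenter : (Fintype.card ι : ℝ)⁻¹ • ∑ i, f i - a
      = (Fintype.card ι : ℝ)⁻¹ • ∑ i, (f i - a) := by
    rw [Finset.sum_sub_distrib, smul_sub, Finset.sum_const, Finset.card_univ,
      ← Nat.cast_smul_eq_nsmul ℝ, smul_smul, inv_mul_cancel₀ hcard, one_smul]
  rw [hcenter, norm_smul, mul_pow, Real.norm_eq_abs, sq_abs, ← real_inner_self_eq_norm_sq,
    sum_inner]
  simp_rw [inner_sum]

section Counting

variable {ι κ R : Type*} [Fintype ι] [Fintype κ] [DecidableEq ι] [DecidableEq κ] [CommRing R]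

theorem Fintype.sum_ite_eq_add_card_sub_one_mul (k : κ) (a b : R) :
    ∑ l, (if k = l then a else b) = a + (Fintype.card κ - 1) * b := by
  have hsplit : ∀ l, (if k = l then a else b) = (if k = l then a - b else 0) + b := fun l => by
    split_ifs <;> ring
  simp only [hsplit, Finset.sum_add_distrib, Finset.sum_ite_eq, Finset.mem_univ, if_true,
    Finset.sum_const, Finset.card_univ, nsmul_eq_mul]
  ring

theorem Fintype.sum_sum_ite_eq_fst_snd (a b c d : R) :
    ∑ p : ι × κ, ∑ q : ι × κ,
        (if p.1 = q.1 then (if p.2 = q.2 then a else b) else (if p.2 = q.2 then c else d))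
      = Fintype.card ι * Fintype.card κ * (a + (Fintype.card κ - 1) * b
          + (Fintype.card ι - 1) * (c + (Fintype.card κ - 1) * d)) := by
  have hrow : ∀ p : ι × κ, ∑ q : ι × κ,
      (if p.1 = q.1 then (if p.2 = q.2 then a else b) else (if p.2 = q.2 then c else d))
        = a + (Fintype.card κ - 1) * b
          + (Fintype.card ι - 1) * (c + (Fintype.card κ - 1) * d) := by
    rintro ⟨i, k⟩
    simp only [Fintype.sum_prod_type, Finset.sum_ite_irrel,
      Fintype.sum_ite_eq_add_card_sub_one_mul]
  simp only [hrow, Finset.sum_const, Finset.card_univ, Fintype.card_prod, nsmul_eq_mul]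
  push_cast
  ring

end Counting

/-- **Exact variance formula for the multi-mix gradient estimator** (key identity in the
proof of Proposition 1): with `B` i.i.d. sample pairs `p_i ∼ μ`, `K` i.i.d. mixing
weights `λ_k ∼ ν` shared across all pairs (all mutually independent),
`Var[g̃] = (1/K)((1/B) Var[g] + ((B−1)/B) V_λ) + (1 − 1/K)(1/B) V_x`. -/
theorem multi_mix_variance_formula
    {P Λ E : Type*} [MeasurableSpace P] [MeasurableSpace Λ]
    [NormedAddCommGroup E] [InnerProductSpace ℝ E] [FiniteDimensional ℝ E]
    (μ : Measure P) (ν : Measure Λ) [IsProbabilityMeasure μ] [IsProbabilityMeasure ν]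
    (g : P × Λ → E) (hg : MemLp g 2 (μ.prod ν))
    (gbar : E) (hgbar : gbar = ∫ x, g x ∂(μ.prod ν))
    (g1 : P → E) (hg1 : ∀ p, g1 p = ∫ l, g (p, l) ∂ν)
    (g2 : Λ → E) (hg2 : ∀ l, g2 l = ∫ p, g (p, l) ∂μ)
    (Varg Vx Vl : ℝ)
    (hVarg : Varg = ∫ x, ‖g x - gbar‖ ^ 2 ∂(μ.prod ν))
    (hVx : Vx = ∫ p, ‖g1 p - gbar‖ ^ 2 ∂μ)
    (hVl : Vl = ∫ l, ‖g2 l - gbar‖ ^ 2 ∂ν)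
    (B K : ℕ) (hB : 1 ≤ B) (hK : 1 ≤ K) :
    ∫ x : (Fin B → P) × (Fin K → Λ),
        ‖((K : ℝ) * B)⁻¹ • (∑ i : Fin B, ∑ k : Fin K, g (x.1 i, x.2 k)) - gbar‖ ^ 2
      ∂((Measure.pi fun _ : Fin B => μ).prod (Measure.pi fun _ : Fin K => ν))
      = (K : ℝ)⁻¹ * ((B : ℝ)⁻¹ * Varg + (((B : ℝ) - 1) / B) * Vl)
        + (1 - (K : ℝ)⁻¹) * ((B : ℝ)⁻¹ * Vx) := by
  obtain rfl : g1 = fun p => ∫ l, g (p, l) ∂ν := funext hg1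
  obtain rfl : g2 = fun l => ∫ p, g (p, l) ∂μ := funext hg2
  subst hgbar hVarg hVx hVl
  have : Nonempty (Fin B × Fin K) := ⟨(⟨0, hB⟩, ⟨0, hK⟩)⟩
  have hB0 : (B : ℝ) ≠ 0 := Nat.cast_ne_zero.2 (by omega)
  have hK0 : (K : ℝ) ≠ 0 := Nat.cast_ne_zero.2 (by omega)
  have hcard : ((K : ℝ) * B)⁻¹ = (Fintype.card (Fin B × Fin K) : ℝ)⁻¹ := by simp [mul_comm]
  simp_rw [hcard, ← Fintype.sum_prod_type', norm_inv_card_smul_sum_sub_sq]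
  rw [integral_const_mul, integral_sum_inner_sub_integral_pi_prod_pi μ ν hg,
    Fintype.sum_sum_ite_eq_fst_snd]
  simp only [Fintype.card_prod, Fintype.card_fin, Nat.cast_mul]
  field_simp
  ring
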